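/- (Lemma "eta-iso".) Suppose the functor i : C ⥤ D is fully faithful. Then for any adjunction L ⊣ i^* with L : C*-A ⥤ D*-A, the unit η : 1_{C*-A} → i^* ∘ L is a natural isomorphism; equivalently, the left adjoint L is fully faithful. -/

import Mathlib

/-!
Left Kan extension along `i` preserves pointedness, so it restricts to a left adjoint of `i^*`
on pointed diagrams. Since `i` is fully faithful, the unit `X ⟶ i^* (i.lan X)` is an isomorphism,
and any other left adjoint of `i^*` is isomorphic to this one, compatibly with the units.
-/

open CategoryTheory CategoryTheory.Limits

universe v u

/-- The category of pointed diagrams: functors `C ⥤ A` sending every zero object of `C`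
to a terminal object of `A`. -/
abbrev PtdDiag (C : Type v) [SmallCategory C] (A : Type u) [Category.{v} A] :=
  ObjectProperty.FullSubcategory (fun X : C ⥤ A => ∀ c : C, IsZero c → Nonempty (IsTerminal (X.obj c)))

/-- The restriction (precomposition) functor `i^* : D*-A ⥤ C*-A` induced by a
basepoint-preserving functor `i : C ⥤ D`. -/
def istar {C D : Type v} [SmallCategory C] [SmallCategory D]
    (zC : C) (hzC : IsZero zC) (i : C ⥤ D) (hi : IsZero (i.obj zC))
    (A : Type u) [Category.{v} A] :
    PtdDiag D A ⥤ PtdDiag C A :=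
  ObjectProperty.lift _
    (ObjectProperty.ι _ ⋙ (Functor.whiskeringLeft C D A).obj i)
    (fun Y c hc => Y.property (i.obj c) (hi.of_iso (i.mapIso (hc.iso hzC))))

namespace CategoryTheory.Adjunction

variable {C D : Type*} [Category C] [Category D]

theorem isIso_unit_of_isIso_unit {F F' : C ⥤ D} {G : D ⥤ C} (adj : F ⊣ G) (adj' : F' ⊣ G)
    [IsIso adj'.unit] : IsIso adj.unit :=
  adj.isIso_unit_of_iso (Functor.isoWhiskerRight (adj.leftAdjointUniq adj') G ≪≫
    (asIso adj'.unit).symm)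

variable {C' D' : Type*} [Category C'] [Category D'] {iC : C ⥤ C'} {iD : D ⥤ D'}
  {L' : C' ⥤ D'} {R' : D' ⥤ C'} (adj : L' ⊣ R') (hiC : iC.FullyFaithful)
  (hiD : iD.FullyFaithful) {L : C ⥤ D} {R : D ⥤ C} (comm1 : iC ⋙ L' ≅ L ⋙ iD)
  (comm2 : iD ⋙ R' ≅ R ⋙ iC)

instance isIso_restrictFullyFaithful_unit [IsIso adj.unit] :
    IsIso (adj.restrictFullyFaithful hiC hiD comm1 comm2).unit := by
  have (X : C) : IsIso ((adj.restrictFullyFaithful hiC hiD comm1 comm2).unit.app X) := by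
    have : IsIso (iC.map ((adj.restrictFullyFaithful hiC hiD comm1 comm2).unit.app X)) := by
      rw [map_restrictFullyFaithful_unit_app]
      infer_instance
    exact hiC.isIso_of_isIso_map _
  exact NatIso.isIso_of_isIso_app _

end CategoryTheory.Adjunction

noncomputable def CategoryTheory.Functor.isTerminalLanObjObjOfIsZero {C D : Type v}
    [SmallCategory C] [SmallCategory D] (i : C ⥤ D) [i.Full] [i.Faithful] {A : Type u}
    [Category.{v} A] [HasColimits A] {X : C ⥤ A} {zC : C} (hX : IsTerminal (X.obj zC))
    (hi : IsZero (i.obj zC)) {d : D} (hd : IsZero d) : IsTerminal ((i.lan.obj X).obj d) :=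
  hX.ofIso (asIso ((i.lanUnit.app X).app zC) ≪≫ (i.lan.obj X).mapIso (hi.iso hd))

section

variable {C D : Type v} [SmallCategory C] [SmallCategory D] (i : C ⥤ D) [i.Full] [i.Faithful]
  {zC : C} (hzC : IsZero zC) (hi : IsZero (i.obj zC)) (A : Type u) [Category.{v} A] [HasColimits A]

noncomputable def ptdLan : PtdDiag C A ⥤ PtdDiag D A :=
  ObjectProperty.lift _ (ObjectProperty.ι _ ⋙ i.lan) fun X _ hd =>
    (X.property zC hzC).map fun hX => i.isTerminalLanObjObjOfIsZero hX hi hd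

noncomputable def ptdLanAdjunction : ptdLan i hzC hi A ⊣ istar zC hzC i hi A :=
  (i.lanAdjunction A).restrictFullyFaithful (ObjectProperty.fullyFaithfulι _)
    (ObjectProperty.fullyFaithfulι _) (ObjectProperty.liftCompιIso _ _ _).symm
    (ObjectProperty.liftCompιIso _ _ _).symm

instance isIso_ptdLanAdjunction_unit : IsIso (ptdLanAdjunction i hzC hi A).unit :=
  Adjunction.isIso_restrictFullyFaithful_unit ..

end

theorem unit_isIso_of_fullyFaithful_general {C D : Type v} [SmallCategory C] [SmallCategory D]
    (zC : C) (hzC : IsZero zC) (i : C ⥤ D) (hi : IsZero (i.obj zC))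
    [i.Full] [i.Faithful]
    (A : Type u) [Category.{v} A] [HasColimits A]
    (L : PtdDiag C A ⥤ PtdDiag D A) (adj : L ⊣ istar zC hzC i hi A) :
    IsIso adj.unit :=
  adj.isIso_unit_of_isIso_unit (ptdLanAdjunction i hzC hi A)

/-- **Lemma `eta-iso`.** If `i : C ⥤ D` is fully faithful, then for any adjunction
`L ⊣ i^*`, the unit `η : 1 → i^* ∘ L` is a natural isomorphism (equivalently, the
left adjoint `L` is fully faithful). -/
theorem unit_isIso_of_fullyFaithful {C D : Type v} [SmallCategory C] [SmallCategory D]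
    (zC : C) (hzC : IsZero zC) (i : C ⥤ D) (hi : IsZero (i.obj zC))
    [i.Full] [i.Faithful]
    (A : Type u) [Category.{v} A] [HasLimits A] [HasColimits A]
    (L : PtdDiag C A ⥤ PtdDiag D A) (adj : L ⊣ istar zC hzC i hi A) :
    IsIso adj.unit :=
  unit_isIso_of_fullyFaithful_general zC hzC i hi A L adj
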